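/- arXiv:2412.14975 — 2 statements merged into one kernel-verified Lean document; each statement's English description precedes it below -/
import Mathlib

section
/- Correctness of RID with minimized interface: let B_min be obtained from the RI-DFA B by partitioning the singleton initial states into language-equivalence classes, choosing a delegate in each class, and downgrading the other states of each class to non-initial; adjust the interface function by φ_min(PLAS) = { p ∈ I^{B_min} : ∃ {q} ∈ φ(PLAS) with {q} = p or {q} delegates to p }. Then for every string x and segmentation into chunks, the device RID_min using B_min and φ_min accepts x iff the original RID (equivalently, the NFA N) accepts x. -/
/-- One-step determinized (subset) transition of an NFA: `δ^B(S,a) = ⋃_{q∈S} ρ(q,a)`.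
    The empty set plays the role of "undefined". -/
def dTrans {Q σ : Type*} (ρ : Q → σ → Set Q) (S : Set Q) (a : σ) : Set Q :=
  ⋃ q ∈ S, ρ q a

/-- Determinized transition extended to strings: `δ^B*(S,x)`. -/
def dRun {Q σ : Type*} (ρ : Q → σ → Set Q) (S : Set Q) (x : List σ) : Set Q :=
  x.foldl (dTrans ρ) S

/-- NFA transition relation extended to strings, by recursion on the string: `ρ*(q,x)`. -/
def nRun {Q σ : Type*} (ρ : Q → σ → Set Q) : Q → List σ → Set Q
  | q, [] => {q}
  | q, a :: x => ⋃ q' ∈ ρ q a, nRun ρ q' x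

/-- The interface function `φ`: maps a set of subset-states to the set of
    singletons of their member NFA states. -/
def phi {Q : Type*} (P : Set (Set Q)) : Set (Set Q) :=
  ⋃ p ∈ P, {s | ∃ q ∈ p, s = {q}}

/-- One chunk-processing step of the RID join computation:
    `PLAS_i = { δ^B(s, y_i) : s ∈ φ(PLAS_{i-1}) ∩ PIS_i }`,
    where `PIS_i` keeps exactly the singletons on which the run is defined. -/
def riStep {Q σ : Type*} (ρ : Q → σ → Set Q) (P : Set (Set Q)) (y : List σ) : Set (Set Q) :=
  (fun s => dRun ρ s y) '' {s ∈ phi P | dRun ρ s y ≠ ∅}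

/-- The sets `PLAS_i` computed chunk by chunk; `plas ρ q0 [y_1, …, y_c] = PLAS_c`.
    (Note `phi {{q0}} = {{q0}}`, so the first step is `PLAS_1 = {δ^B({q0},y_1)}` when defined.) -/
def plas {Q σ : Type*} (ρ : Q → σ → Set Q) (q0 : Q) (ys : List (List σ)) : Set (Set Q) :=
  ys.foldl (riStep ρ) {{q0}}

/-- The language accepted by the RI-DFA `B` starting from a state `S`
    (final states of `B` are the subsets meeting `F`). -/
def langB {Q σ : Type*} (ρ : Q → σ → Set Q) (F : Set Q) (S : Set Q) : Set (List σ) :=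
  {x | (dRun ρ S x ∩ F).Nonempty}

/-- The minimized interface function `φ_min` determined by the delegate choice `sel`:
    each NFA state `q` is sent to the singleton of its delegate. -/
def phiMin {Q : Type*} (sel : Q → Q) (P : Set (Set Q)) : Set (Set Q) :=
  ⋃ p ∈ P, {s | ∃ q ∈ p, s = {sel q}}

/-- One chunk-processing step of the minimized device `RID_min`. -/
def riStepMin {Q σ : Type*} (ρ : Q → σ → Set Q) (sel : Q → Q)
    (P : Set (Set Q)) (y : List σ) : Set (Set Q) :=
  (fun s => dRun ρ s y) '' {s ∈ phiMin sel P | dRun ρ s y ≠ ∅}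

/-- The `PLAS` sets of `RID_min`: the first chunk starts from `{q0}`; every join uses
    the adjusted interface function `φ_min`. -/
def plasMin {Q σ : Type*} (ρ : Q → σ → Set Q) (sel : Q → Q) (q0 : Q) :
    List (List σ) → Set (Set Q)
  | [] => {{q0}}
  | y :: ys => ys.foldl (riStepMin ρ sel) (riStep ρ {{q0}} y)

section Aux

variable {Q σ : Type*} (ρ : Q → σ → Set Q)

lemma dRun_eq (x : List σ) : ∀ S : Set Q, dRun ρ S x = ⋃ q ∈ S, nRun ρ q x := by
  induction x with
  | nil => intro S; simp [dRun, nRun]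
  | cons a x ih =>
    intro S
    show dRun ρ (dTrans ρ S a) x = _
    rw [ih]
    ext q'
    simp only [dTrans, nRun, Set.mem_iUnion]
    tauto

lemma dRun_single (q : Q) (x : List σ) : dRun ρ {q} x = nRun ρ q x := by
  rw [dRun_eq]; simp

lemma langB_append (F : Set Q) (q : Q) (x w : List σ) :
    (x ++ w) ∈ langB ρ F {q} ↔ ∃ q' ∈ nRun ρ q x, w ∈ langB ρ F {q'} := by
  have h1 : nRun ρ q (x ++ w) = ⋃ q' ∈ nRun ρ q x, nRun ρ q' w := by
    rw [← dRun_single ρ q (x ++ w), ← dRun_eq, ← dRun_single ρ q x]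
    exact List.foldl_append ..
  simp only [langB, Set.mem_setOf_eq, dRun_single, h1,
    Set.Nonempty, Set.mem_inter_iff, Set.mem_iUnion]
  tauto

lemma mem_riStepMin (sel : Q → Q) (P : Set (Set Q)) (z : List σ) (q' : Q) :
    (∃ p ∈ riStepMin ρ sel P z, q' ∈ p) ↔
      ∃ q, (∃ p ∈ P, q ∈ p) ∧ q' ∈ nRun ρ (sel q) z := by
  constructor
  · rintro ⟨p, hp, hq'⟩
    obtain ⟨s, ⟨hs, -⟩, rfl⟩ := hp
    simp only [phiMin, Set.mem_iUnion, Set.mem_setOf_eq] at hs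
    obtain ⟨p0, hp0, q, hq, rfl⟩ := hs
    simp only [dRun_single] at hq'
    exact ⟨q, ⟨p0, hp0, hq⟩, hq'⟩
  · rintro ⟨q, ⟨p0, hp0, hq⟩, hq'⟩
    refine ⟨dRun ρ {sel q} z, ⟨{sel q}, ⟨?_, ?_⟩, rfl⟩, ?_⟩
    · simp only [phiMin, Set.mem_iUnion, Set.mem_setOf_eq]
      exact ⟨p0, hp0, q, hq, rfl⟩
    · rw [dRun_single]
      exact Set.nonempty_iff_ne_empty.mp ⟨q', hq'⟩
    · rw [dRun_single]; exact hq'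

lemma mem_riStep_init (q0 : Q) (y : List σ) (q' : Q) :
    (∃ p ∈ riStep ρ {{q0}} y, q' ∈ p) ↔ q' ∈ nRun ρ q0 y := by
  constructor
  · rintro ⟨p, hp, hq'⟩
    obtain ⟨s, ⟨hs, -⟩, rfl⟩ := hp
    simp only [phi, Set.mem_singleton_iff, Set.iUnion_iUnion_eq_left,
      Set.mem_setOf_eq] at hs
    obtain ⟨q, hq, rfl⟩ := hs
    subst hq
    simpa only [dRun_single] using hq'
  · intro hq'
    refine ⟨dRun ρ {q0} y, ⟨{q0}, ⟨?_, ?_⟩, rfl⟩, ?_⟩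
    · simp only [phi, Set.mem_singleton_iff, Set.iUnion_iUnion_eq_left,
        Set.mem_setOf_eq]
      exact ⟨q0, rfl, rfl⟩
    · rw [dRun_single]
      exact Set.nonempty_iff_ne_empty.mp ⟨q', hq'⟩
    · rw [dRun_single]; exact hq'

lemma accMin (sel : Q → Q) (F : Set Q)
    (hsel_equiv : ∀ q : Q, langB ρ F {sel q} = langB ρ F {q}) :
    ∀ (zs : List (List σ)) (P : Set (Set Q)),
      ((zs.foldl (riStepMin ρ sel) P) ∩ {p | (p ∩ F).Nonempty}).Nonempty ↔
        ∃ q, (∃ p ∈ P, q ∈ p) ∧ zs.flatten ∈ langB ρ F {q} := by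
  intro zs
  induction zs with
  | nil =>
    intro P
    simp only [List.foldl_nil, List.flatten_nil, langB, Set.mem_setOf_eq, dRun,
      List.foldl_nil, Set.Nonempty, Set.mem_inter_iff, Set.mem_singleton_iff]
    constructor
    · rintro ⟨p, hp, q, hq, hqF⟩
      exact ⟨q, ⟨p, hp, hq⟩, q, rfl, hqF⟩
    · rintro ⟨q, ⟨p, hp, hq⟩, z, hz, hzF⟩
      rw [hz] at hzF
      exact ⟨p, hp, q, hq, hzF⟩
  | cons z zs ih =>
    intro P
    rw [List.foldl_cons, ih]
    constructor
    · rintro ⟨q', hq', hw⟩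
      rw [mem_riStepMin] at hq'
      obtain ⟨q, hq, hq'⟩ := hq'
      refine ⟨q, hq, ?_⟩
      rw [List.flatten_cons, ← hsel_equiv q, langB_append]
      exact ⟨q', hq', hw⟩
    · rintro ⟨q, hq, hw⟩
      rw [List.flatten_cons, ← hsel_equiv q, langB_append] at hw
      obtain ⟨q', hq', hw⟩ := hw
      exact ⟨q', (mem_riStepMin ρ sel P z q').mpr ⟨q, hq, hq'⟩, hw⟩

end Aux

/-- correctness of RID with minimized interface. If `sel` chooses one
    delegate per language-equivalence class of the singleton initial states (delegates are
    equivalent to the states they replace, equivalent states share the same delegate, and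
    a delegate is its own delegate), then for every segmentation the device `RID_min`
    accepts iff the NFA `N` accepts. -/
theorem ridMin_correctness {Q σ : Type*} (ρ : Q → σ → Set Q) (q0 : Q) (F : Set Q)
    (sel : Q → Q)
    (hsel_equiv : ∀ q : Q, langB ρ F {sel q} = langB ρ F {q})
    (hsel_class : ∀ q q' : Q, langB ρ F ({q} : Set Q) = langB ρ F {q'} → sel q = sel q')
    (hsel_idem : ∀ q : Q, sel (sel q) = sel q) :
    ∀ (ys : List (List σ)), 1 ≤ ys.length → (∀ y ∈ ys, y ≠ []) →
      ((plasMin ρ sel q0 ys ∩ {p | (p ∩ F).Nonempty}).Nonempty ↔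
        (nRun ρ q0 ys.flatten ∩ F).Nonempty) := by
  rintro (_ | ⟨y, ys⟩) hlen hne
  · simp at hlen
  · have hpl : plasMin ρ sel q0 (y :: ys) = ys.foldl (riStepMin ρ sel) (riStep ρ {{q0}} y) := rfl
    rw [hpl, accMin ρ sel F hsel_equiv]
    have key : (∃ q, (∃ p ∈ riStep ρ {{q0}} y, q ∈ p) ∧ ys.flatten ∈ langB ρ F {q}) ↔
        (y ++ ys.flatten) ∈ langB ρ F {q0} := by
      rw [langB_append]
      constructor
      · rintro ⟨q, hq, hw⟩
        exact ⟨q, (mem_riStep_init ρ q0 y q).mp hq, hw⟩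
      · rintro ⟨q, hq, hw⟩
        exact ⟨q, (mem_riStep_init ρ q0 y q).mpr hq, hw⟩
    rw [key]
    simp only [langB, Set.mem_setOf_eq, dRun_single, List.flatten_cons]
end

section
/- The number of initial states of the interface-minimized RI-DFA B_min of NFA N equals the number of distinct state languages of N, i.e., |I^{B_min}| = |{ L_N(q) : q ∈ Q_N }|, and |{ L_N(q) : q ∈ Q_N }| can be strictly smaller than the number of states of the minimal DFA of L(N). -/
/-- The language `L_N(q)` accepted by the NFA starting at state `q`. -/
def nfaLangFrom {Q σ : Type*} (ρ : Q → σ → Set Q) (F : Set Q) (q : Q) : Set (List σ) :=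
  {x | (nRun ρ q x ∩ F).Nonempty}

/-- The language of an NFA. -/
def nfaLang {Q σ : Type*} (ρ : Q → σ → Set Q) (q0 : Q) (F : Set Q) : Set (List σ) :=
  {x | (nRun ρ q0 x ∩ F).Nonempty}

/-- The nonempty left quotients `u⁻¹L` of a language `L`: the states of its minimal DFA. -/
def leftQuotients {σ : Type*} (L : Set (List σ)) : Set (Set (List σ)) :=
  {M | M ≠ ∅ ∧ ∃ u : List σ, M = {x | u ++ x ∈ L}}

/-! ### Auxiliary lemmas -/

lemma dRun_eq_biUnion {Q σ : Type*} (ρ : Q → σ → Set Q) (x : List σ) (S : Set Q) :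
    dRun ρ S x = ⋃ q ∈ S, nRun ρ q x := by
  induction x generalizing S with
  | nil => simp [dRun, nRun]
  | cons a x ih =>
    show dRun ρ (dTrans ρ S a) x = _
    rw [ih]
    ext p
    simp only [dTrans, nRun, Set.mem_iUnion, exists_prop]
    constructor
    · rintro ⟨q', ⟨⟨q, hq, hq'⟩, hp⟩⟩
      exact ⟨q, hq, q', hq', hp⟩
    · rintro ⟨q, hq, q', hq', hp⟩
      exact ⟨q', ⟨⟨q, hq, hq'⟩, hp⟩⟩

lemma langB_singleton {Q σ : Type*} (ρ : Q → σ → Set Q) (F : Set Q) (q : Q) :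
    langB ρ F ({q} : Set Q) = nfaLangFrom ρ F q := by
  ext x
  simp [langB, nfaLangFrom, dRun_eq_biUnion]

/-! ### The example NFA: 2 states over a unary alphabet, language `{x | x.length ≠ 1}` -/

def exρ : Bool → Unit → Set Bool := fun b _ => if b then Set.univ else {true}

lemma nRun_true_of_ne_nil : ∀ x : List Unit, x ≠ [] → nRun exρ true x = Set.univ := by
  intro x
  induction x with
  | nil => intro h; exact absurd rfl h
  | cons a y ih =>
    intro _
    ext p
    simp only [nRun, exρ, if_pos rfl, Set.mem_iUnion, Set.mem_univ, iff_true]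
    rcases y with _ | ⟨b, z⟩
    · exact ⟨p, Set.mem_univ _, by simp [nRun]⟩
    · exact ⟨true, Set.mem_univ _, by rw [ih (by simp)]; trivial⟩

lemma exLang_true : nfaLangFrom exρ ({false} : Set Bool) true = {x : List Unit | x ≠ []} := by
  ext x
  rcases x with _ | ⟨a, y⟩
  · simp [nfaLangFrom, nRun]
  · simp only [nfaLangFrom, Set.mem_setOf_eq, nRun_true_of_ne_nil (a :: y) (by simp)]
    simp

lemma length_ne_zero_iff' (x : List Unit) : x.length ≠ 0 ↔ x ≠ [] :=
  not_congr List.length_eq_zero_iff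

lemma exLang_false :
    nfaLangFrom exρ ({false} : Set Bool) false = {x : List Unit | x.length ≠ 1} := by
  ext x
  rcases x with _ | ⟨a, y⟩
  · simp [nfaLangFrom, nRun]
  · have h1 : nRun exρ false (a :: y) = nRun exρ true y := by
      simp [nRun, exρ]
    rcases y with _ | ⟨b, z⟩
    · simp [nfaLangFrom, h1, nRun, exρ]
    · simp only [nfaLangFrom, Set.mem_setOf_eq, h1,
        nRun_true_of_ne_nil (b :: z) (by simp)]
      simp

lemma ex_quotients :
    leftQuotients ({x : List Unit | x.length ≠ 1}) =
      {{x : List Unit | x.length ≠ 1}, {x : List Unit | x ≠ []}, Set.univ} := by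
  ext M
  constructor
  · rintro ⟨hne, u, rfl⟩
    rcases u with _ | ⟨a, _ | ⟨b, t⟩⟩
    · left; rfl
    · right; left
      ext x
      simp only [Set.mem_setOf_eq, List.cons_append, List.nil_append, List.length_cons,
        ← length_ne_zero_iff']
      omega
    · right; right
      ext x
      simp only [Set.mem_setOf_eq, List.cons_append, List.length_cons, List.length_append,
        Set.mem_univ, iff_true]
      omega
  · intro hM
    rcases hM with rfl | rfl | rfl
    · refine ⟨?_, [], by simp⟩
      intro h
      have h2 : ([] : List Unit) ∈ ({x : List Unit | x.length ≠ 1}) := by simp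
      rw [h] at h2; exact h2
    · refine ⟨?_, [()], ?_⟩
      · intro h
        have h2 : ([(), ()] : List Unit) ∈ ({x : List Unit | x ≠ []}) := by simp
        rw [h] at h2; exact h2
      · ext x
        simp only [Set.mem_setOf_eq, List.cons_append, List.nil_append, List.length_cons,
          ← length_ne_zero_iff']
        omega
    · refine ⟨?_, [(), ()], ?_⟩
      · intro h
        have h2 : ([] : List Unit) ∈ (Set.univ : Set (List Unit)) := Set.mem_univ _
        rw [h] at h2; exact h2
      · ext x
        simp only [Set.mem_univ, Set.mem_setOf_eq, List.cons_append, List.nil_append,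
          List.length_cons, true_iff]
        omega

/-! ### Distinctness of the three quotients -/

lemma exA_ne_exB :
    ({x : List Unit | x.length ≠ 1} : Set (List Unit)) ≠ {x : List Unit | x ≠ []} := by
  intro h
  have h1 : ([] : List Unit) ∈ ({x : List Unit | x.length ≠ 1}) := by simp
  rw [h] at h1
  exact h1 rfl

lemma exA_ne_univ :
    ({x : List Unit | x.length ≠ 1} : Set (List Unit)) ≠ Set.univ := by
  intro h
  have h1 : ([()] : List Unit) ∈ (Set.univ : Set (List Unit)) := Set.mem_univ _
  rw [← h] at h1
  exact h1 rfl

lemma exB_ne_univ :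
    ({x : List Unit | x ≠ []} : Set (List Unit)) ≠ Set.univ := by
  intro h
  have h1 : ([] : List Unit) ∈ (Set.univ : Set (List Unit)) := Set.mem_univ _
  rw [← h] at h1
  exact h1 rfl

/-- the number of initial states of the interface-minimized RI-DFA `B_min`
    (encoded via the delegate choice `sel`) is at least `|{ L_N(q) : q ∈ Q_N }|`, with
    equality; and there exists an NFA for which `|{ L_N(q) : q ∈ Q_N }|` is strictly
    smaller than the number of states of the minimal DFA of `L(N)`. -/
theorem initial_states_lower_bound {σ QN : Type} [Fintype QN]
    (ρ : QN → σ → Set QN) (q0 : QN) (F : Set QN) (sel : QN → QN)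
    (hsel_equiv : ∀ q : QN, langB ρ F {sel q} = langB ρ F {q})
    (hsel_class : ∀ q q' : QN, langB ρ F ({q} : Set QN) = langB ρ F {q'} → sel q = sel q')
    (hsel_idem : ∀ q : QN, sel (sel q) = sel q) :
    Nat.card (Set.range fun q : QN => nfaLangFrom ρ F q) ≤
        Nat.card (Set.range fun q : QN => ({sel q} : Set QN)) ∧
      Nat.card (Set.range fun q : QN => ({sel q} : Set QN)) =
        Nat.card (Set.range fun q : QN => nfaLangFrom ρ F q) ∧
      ∃ (σ' Q' : Type) (_ : Fintype Q') (ρ' : Q' → σ' → Set Q') (q0' : Q') (F' : Set Q'),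
        Nat.card (Set.range fun q : Q' => nfaLangFrom ρ' F' q) <
          Nat.card (leftQuotients (nfaLang ρ' q0' F')) := by
  set g : QN → Set (List σ) := nfaLangFrom ρ F with hg
  have key : ∀ q : QN, g (sel q) = g q := by
    intro q
    rw [hg, ← langB_singleton, ← langB_singleton, hsel_equiv]
  -- card of the singleton-range equals card of range of `sel`
  have h1 : Nat.card (Set.range fun q : QN => ({sel q} : Set QN)) =
      Nat.card (Set.range sel) := by
    have : (Set.range fun q : QN => ({sel q} : Set QN)) =
        (fun s : QN => ({s} : Set QN)) '' Set.range sel := by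
      rw [← Set.range_comp]; rfl
    rw [this, Nat.card_image_of_injective Set.singleton_injective]
  -- card of range of `sel` equals card of range of `g`
  have hinj : Set.InjOn g (Set.range sel) := by
    rintro s ⟨q, rfl⟩ s' ⟨q', rfl⟩ h
    rw [key, key] at h
    apply hsel_class
    rw [langB_singleton, langB_singleton]
    exact h
  have himg : g '' Set.range sel = Set.range g := by
    rw [← Set.range_comp]
    ext M
    constructor
    · rintro ⟨q, rfl⟩; exact ⟨sel q, rfl⟩
    · rintro ⟨q, rfl⟩; exact ⟨q, key q⟩
  have h2 : Nat.card (Set.range sel) = Nat.card (Set.range g) := by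
    rw [← himg, Nat.card_image_of_injOn hinj]
  have hmain : Nat.card (Set.range fun q : QN => ({sel q} : Set QN)) =
      Nat.card (Set.range fun q : QN => nfaLangFrom ρ F q) := by
    rw [h1, h2]
  refine ⟨hmain.ge, hmain, ?_⟩
  -- the example
  refine ⟨Unit, Bool, inferInstance, exρ, false, ({false} : Set Bool), ?_⟩
  have hL : nfaLang exρ false ({false} : Set Bool) = {x : List Unit | x.length ≠ 1} :=
    exLang_false
  have hrange : (Set.range fun q : Bool => nfaLangFrom exρ ({false} : Set Bool) q) =
      {({x : List Unit | x.length ≠ 1} : Set (List Unit)), {x : List Unit | x ≠ []}} := by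
    ext M
    constructor
    · rintro ⟨b, rfl⟩
      cases b
      · left; exact exLang_false
      · right; exact exLang_true
    · rintro (rfl | rfl)
      · exact ⟨false, exLang_false⟩
      · exact ⟨true, exLang_true⟩
  rw [hL, hrange, ex_quotients]
  rw [Nat.card_coe_set_eq, Nat.card_coe_set_eq]
  rw [Set.ncard_pair exA_ne_exB]
  rw [Set.ncard_insert_of_notMem (by
    simp only [Set.mem_insert_iff, Set.mem_singleton_iff]
    push_neg
    exact ⟨exA_ne_exB, exA_ne_univ⟩)]
  rw [Set.ncard_pair exB_ne_univ]
  omega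
end
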